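/- arXiv:2009.01811 — 3 statements merged into one kernel-verified Lean document; each statement's English description precedes it below -/
import Mathlib

section
/- Let f: ℝ → ℝ be p times continuously differentiable near b, with f^{(p)} Lipschitz near b. If b is a local minimizer of f on [a,b] (right endpoint), and q ≤ p is the smallest odd index with f^{(q)}(b) ≠ 0 while all lower-order derivatives vanish, then f^{(q)}(b) < 0. -/
/-!
If `f^{(q)}(b) > 0`, then `f^{(q)}` stays positive near `b`, and Taylor's theorem with Lagrange
remainder, all lower-order terms vanishing, gives `f x - f b = f^{(q)}(ξ) (x - b)^q / q!` with
`ξ` between `x` and `b`. For `x < b` the odd power `(x - b)^q` is negative, so `f x < f b`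
arbitrarily close to `b` on the left, contradicting minimality on `[a, b]`.
-/

open Set Filter Topology Nat

theorem taylorWithinEval_eq_self_of_iteratedDerivWithin_eq_zero {E : Type*}
    [NormedAddCommGroup E] [NormedSpace ℝ E] {f : ℝ → E} {s : Set ℝ} {x₀ : ℝ} {n : ℕ}
    (h : ∀ j, 1 ≤ j → j ≤ n → iteratedDerivWithin j f s x₀ = 0) (x : ℝ) :
    taylorWithinEval f n s x₀ x = f x₀ := by
  induction n with
  | zero => exact taylor_within_zero_eval f s x₀ x
  | succ k ih =>
    rw [taylorWithinEval_succ, ih fun j hj hjk ↦ h j hj (hjk.trans k.le_succ),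
      h (k + 1) k.succ_pos le_rfl]
    simp

theorem ContDiffAt.continuousAt_iteratedDeriv {𝕜 F : Type*} [NontriviallyNormedField 𝕜]
    [NormedAddCommGroup F] [NormedSpace 𝕜 F] {f : 𝕜 → F} {x : 𝕜} {n : WithTop ℕ∞} {k : ℕ}
    (hf : ContDiffAt 𝕜 n f x) (hk : k ≤ n) : ContinuousAt (iteratedDeriv k f) x := by
  rw [iteratedDeriv_eq_equiv_comp]
  exact (ContinuousMultilinearMap.piFieldEquiv 𝕜 (Fin k) F).symm.continuous.continuousAt.comp
    (hf.continuousAt_iteratedFDeriv hk)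

theorem exists_sub_eq_iteratedDeriv_mul_of_iteratedDeriv_eq_zero {f : ℝ → ℝ} {x₀ x : ℝ} {n : ℕ}
    (hx : x₀ ≠ x) (hf : ContDiffOn ℝ (n + 1) f (uIcc x₀ x)) (hf₀ : ContDiffAt ℝ n f x₀)
    (h : ∀ j, 1 ≤ j → j ≤ n → iteratedDeriv j f x₀ = 0) :
    ∃ ξ ∈ uIoo x₀ x, f x - f x₀ = iteratedDeriv (n + 1) f ξ * (x - x₀) ^ (n + 1) / (n + 1)! := by
  obtain ⟨ξ, hξ, hTaylor⟩ := taylor_mean_remainder_lagrange_iteratedDeriv hx hf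
  rw [taylorWithinEval_eq_self_of_iteratedDerivWithin_eq_zero] at hTaylor
  · exact ⟨ξ, hξ, hTaylor⟩
  intro j hj hjn
  rw [iteratedDerivWithin_eq_iteratedDeriv (uniqueDiffOn_uIcc hx)
    (hf₀.of_le (by exact_mod_cast hjn)) left_mem_uIcc, h j hj hjn]

theorem eventually_nhdsLT_lt_of_iteratedDeriv_pos {f : ℝ → ℝ} {b : ℝ} {n : ℕ}
    (hf : ContDiffAt ℝ (n + 1) f b) (hn : Even n)
    (h : ∀ j, 1 ≤ j → j ≤ n → iteratedDeriv j f b = 0) (hpos : 0 < iteratedDeriv (n + 1) f b) :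
    ∀ᶠ x in 𝓝[<] b, f x < f b := by
  have hnear : ∀ᶠ y in 𝓝 b, ContDiffAt ℝ (n + 1) f y ∧ 0 < iteratedDeriv (n + 1) f y :=
    (hf.eventually (by simp)).and
      ((hf.continuousAt_iteratedDeriv le_rfl).eventually (lt_mem_nhds hpos))
  obtain ⟨l, hlb, hl⟩ := exists_Ioc_subset_of_mem_nhds hnear ⟨b - 1, by linarith⟩
  filter_upwards [Ioo_mem_nhdsLT hlb] with x hx
  have hIcc : uIcc b x ⊆ Ioc l b := by
    rw [uIcc_of_ge hx.2.le]
    exact Icc_subset_Ioc_iff hx.2.le |>.mpr ⟨hx.1, le_rfl⟩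
  obtain ⟨ξ, hξ, hTaylor⟩ := exists_sub_eq_iteratedDeriv_mul_of_iteratedDeriv_eq_zero hx.2.ne'
    (fun y hy ↦ (hl (hIcc hy)).1.contDiffWithinAt) (hf.of_le (by simp)) h
  have hξpos : 0 < iteratedDeriv (n + 1) f ξ := (hl (hIcc (uIoo_subset_uIcc_self hξ))).2
  have hpow : (x - b) ^ (n + 1) < 0 := hn.add_one.pow_neg_iff.mpr (by linarith [hx.2])
  have : f x - f b < 0 := by
    rw [hTaylor]
    exact div_neg_of_neg_of_pos (mul_neg_of_pos_of_neg hξpos hpow) (by positivity)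
  linarith

theorem stmt_2_general (f : ℝ → ℝ) (p q : ℕ) (a b : ℝ) (K : NNReal)
    (hreg : ∃ U ∈ nhds b, ContDiffOn ℝ p f U ∧
      LipschitzOnWith K (iteratedDeriv p f) U)
    (hab : a < b)
    (hmin : IsLocalMinOn f (Set.Icc a b) b)
    (hodd : Odd q) (hqp : q ≤ p)
    (hzero : ∀ j, 1 ≤ j → j < q → iteratedDeriv j f b = 0)
    (hne : iteratedDeriv q f b ≠ 0) :
    iteratedDeriv q f b < 0 := by
  obtain ⟨n, hn, rfl⟩ : ∃ n, Even n ∧ q = n + 1 := by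
    obtain ⟨k, rfl⟩ := hodd
    exact ⟨2 * k, even_two_mul k, rfl⟩
  obtain ⟨U, hU, hfU, -⟩ := hreg
  refine hne.lt_or_gt.resolve_right fun hpos ↦ ?_
  have hbelow := eventually_nhdsLT_lt_of_iteratedDeriv_pos
    ((hfU.contDiffAt hU).of_le (by exact_mod_cast hqp)) hn
    (fun j hj hjn ↦ hzero j hj (Nat.lt_succ_of_le hjn)) hpos
  have hmin' : ∀ᶠ x in 𝓝[<] b, f b ≤ f x := by
    rw [← nhdsWithin_Ico_eq_nhdsLT hab]
    exact nhdsWithin_mono b Ico_subset_Icc_self hmin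
  obtain ⟨x, hlt, hle⟩ := (hbelow.and hmin').exists
  exact (hlt.trans_le hle).false

theorem stmt_2 (f : ℝ → ℝ) (p q : ℕ) (a b : ℝ) (K : NNReal)
    (hreg : ∃ U ∈ nhds b, ContDiffOn ℝ p f U ∧
      LipschitzOnWith K (iteratedDeriv p f) U)
    (hab : a < b)
    (hmin : IsLocalMinOn f (Set.Icc a b) b)
    (hodd : Odd q) (hq1 : 1 ≤ q) (hqp : q ≤ p)
    (hzero : ∀ j, 1 ≤ j → j < q → iteratedDeriv j f b = 0)
    (hne : iteratedDeriv q f b ≠ 0) :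
    iteratedDeriv q f b < 0 :=
  stmt_2_general f p q a b K hreg hab hmin hodd hqp hzero hne
end

section
/- Let f: ℝ → ℝ be p times continuously differentiable with f^{(p)} Lipschitz near x*. If x* is an (unconstrained) local minimizer of f, then x* is a local minimizer of the Taylor polynomial T_p(x*, ·) of order p of f around x*. -/
/-!
By Taylor's theorem with Peano remainder, `f - T_p = o((x - x*)^p)` near `x*`. Unless `T_p` is
constant, `T_p(x) - T_p(x*) = (x - x*)^k R(x)` with `R` a polynomial, `c := R(x*) ≠ 0` and
`k ≤ p` the multiplicity of the root `x*`; hence `0 ≤ f(x) - f(x*) = c (x - x*)^k + o((x - x*)^k)`.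
Testing this along the ray `x* + s t`, `s → 0⁺`, gives `c t^k ≥ 0` for every `t`, and then
`T_p(x) - T_p(x*) = c (x - x*)^k · R(x)/c ≥ 0` as soon as `R(x)/c > 0`, i.e. near `x*`.
-/

open Filter Topology Asymptotics Polynomial
open scoped Nat

theorem mul_pow_nonneg_of_isLittleO_of_eventually_nonneg {h : ℝ → ℝ} {c x₀ : ℝ} {k : ℕ}
    (hh : h =o[𝓝 x₀] fun x => (x - x₀) ^ k)
    (hnonneg : ∀ᶠ x in 𝓝 x₀, 0 ≤ c * (x - x₀) ^ k + h x) (t : ℝ) : 0 ≤ c * t ^ k := by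
  by_contra! hneg
  have htk : 0 < |t| ^ k := by rw [← abs_pow]; exact abs_pos.2 fun h0 => by simp [h0] at hneg
  set ε := -(c * t ^ k) / (2 * |t| ^ k)
  have hε : 0 < ε := div_pos (neg_pos.2 hneg) (by positivity)
  have hray : Tendsto (fun s : ℝ => x₀ + s * t) (𝓝[>] 0) (𝓝 x₀) := by
    have : Continuous fun s : ℝ => x₀ + s * t := by fun_prop
    simpa using (this.tendsto 0).mono_left nhdsWithin_le_nhds
  obtain ⟨s, ⟨hs_bound, hs_nonneg⟩, hs_pos : 0 < s⟩ :=
    (((hray.eventually (hh.def hε)).and (hray.eventually hnonneg)).and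
      self_mem_nhdsWithin).exists
  simp only [add_sub_cancel_left, mul_pow, Real.norm_eq_abs, abs_mul, abs_pow,
    abs_of_pos hs_pos] at hs_bound hs_nonneg
  have hε_mul : ε * (s ^ k * |t| ^ k) = s ^ k * (c * t ^ k) / -2 := by
    simp only [ε]; field_simp
  nlinarith [le_abs_self (h (x₀ + s * t)), mul_neg_of_pos_of_neg (pow_pos hs_pos k) hneg]

theorem IsLocalMin.of_isLittleO_of_eq_add_pow_mul {f P R : ℝ → ℝ} {x₀ : ℝ} {k : ℕ}
    (hf : IsLocalMin f x₀) (hfP : (fun x => f x - P x) =o[𝓝 x₀] fun x => (x - x₀) ^ k)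
    (hf₀ : f x₀ = P x₀) (hP : ∀ x, P x = P x₀ + (x - x₀) ^ k * R x)
    (hR : ContinuousAt R x₀) (hR₀ : R x₀ ≠ 0) : IsLocalMin P x₀ := by
  set c := R x₀
  have hRc : (fun x => (x - x₀) ^ k * (R x - c)) =o[𝓝 x₀] fun x => (x - x₀) ^ k := by
    simpa using (isBigO_refl (fun x => (x - x₀) ^ k) _).mul_isLittleO
      (isLittleO_one_iff ℝ |>.2 (tendsto_sub_nhds_zero_iff.2 hR))
  have hexp : (fun x => f x - f x₀ - c * (x - x₀) ^ k) =o[𝓝 x₀] fun x => (x - x₀) ^ k := by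
    refine (hfP.add hRc).congr_left fun x => ?_
    rw [hP x, hf₀]
    ring
  have hsign : ∀ t, 0 ≤ c * t ^ k := mul_pow_nonneg_of_isLittleO_of_eventually_nonneg hexp <| by
    filter_upwards [hf] with x hx
    linarith
  have hratio : ∀ᶠ x in 𝓝 x₀, 0 < R x / c := by
    refine (hR.div_const c).eventually (eventually_gt_nhds ?_)
    simp [c, hR₀]
  filter_upwards [hratio] with x hx
  have hfactor : P x - P x₀ = c * (x - x₀) ^ k * (R x / c) := by
    rw [hP x]; field_simp; ring
  linarith [mul_nonneg (hsign (x - x₀)) hx.le]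

theorem isBigO_sub_pow_sub_pow {𝕜 : Type*} [NormedField 𝕜] {x₀ : 𝕜} {k n : ℕ} (hkn : k ≤ n) :
    (fun x => (x - x₀) ^ n) =O[𝓝 x₀] fun x => (x - x₀) ^ k := by
  rcases hkn.lt_or_eq with hlt | rfl
  · exact ((isLittleO_pow_pow hlt).comp_tendsto (tendsto_sub_nhds_zero_iff.2 tendsto_id)).isBigO
  · exact isBigO_refl _ _

theorem Polynomial.rootMultiplicity_le_natDegree {R : Type*} [CommRing R] [IsDomain R]
    (Q : R[X]) (a : R) : Q.rootMultiplicity a ≤ Q.natDegree := by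
  classical
  exact (count_roots Q ▸ Multiset.count_le_card _ _).trans (card_roots' Q)

theorem Polynomial.isLocalMin_eval_of_isLittleO {f : ℝ → ℝ} {x₀ : ℝ} {n : ℕ} {Q : ℝ[X]}
    (hQ : Q.natDegree ≤ n) (hf : IsLocalMin f x₀)
    (hfQ : (fun x => f x - Q.eval x) =o[𝓝 x₀] fun x => (x - x₀) ^ n)
    (hf₀ : f x₀ = Q.eval x₀) : IsLocalMin (fun x => Q.eval x) x₀ := by
  set Q₀ := Q - C (Q.eval x₀)
  by_cases hQ₀ : Q₀ = 0
  · have hQconst : Q = C (Q.eval x₀) := sub_eq_zero.1 hQ₀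
    rw [hQconst]
    simpa using isLocalMin_const
  obtain ⟨R, hQR, hR⟩ := exists_eq_pow_rootMultiplicity_mul_and_not_dvd Q₀ hQ₀ x₀
  set k := Q₀.rootMultiplicity x₀
  have hkn : k ≤ n := (rootMultiplicity_le_natDegree Q₀ x₀).trans (natDegree_sub_C.trans_le hQ)
  refine hf.of_isLittleO_of_eq_add_pow_mul (hfQ.trans_isBigO (isBigO_sub_pow_sub_pow hkn)) hf₀
    (R := fun x => R.eval x) (fun x => ?_) R.continuous.continuousAt
    (by rwa [dvd_iff_isRoot] at hR)
  have hQRx := congrArg (eval x) hQR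
  simp only [Q₀, eval_sub, eval_C, eval_mul, eval_pow, eval_X] at hQRx
  linarith

noncomputable def taylorPolynomial (f : ℝ → ℝ) (n : ℕ) (x₀ : ℝ) : ℝ[X] :=
  ∑ j ∈ Finset.range (n + 1), C (iteratedDeriv j f x₀ / j !) * (X - C x₀) ^ j

section taylorPolynomial

variable {f : ℝ → ℝ} {n : ℕ} {x₀ : ℝ}

theorem eval_taylorPolynomial (x : ℝ) : (taylorPolynomial f n x₀).eval x =
    ∑ j ∈ Finset.range (n + 1), iteratedDeriv j f x₀ / j ! * (x - x₀) ^ j := by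
  simp [taylorPolynomial, eval_finsetSum]

theorem eval_taylorPolynomial_self : (taylorPolynomial f n x₀).eval x₀ = f x₀ := by
  simp [eval_taylorPolynomial, Finset.sum_range_succ']

theorem natDegree_taylorPolynomial_le : (taylorPolynomial f n x₀).natDegree ≤ n := by
  refine natDegree_sum_le_of_forall_le _ _ fun j hj => ?_
  refine (natDegree_C_mul_le _ _).trans ?_
  rw [natDegree_pow, natDegree_X_sub_C, mul_one]
  exact Finset.mem_range_succ_iff.1 hj

theorem isLittleO_sub_eval_taylorPolynomial {U : Set ℝ} (hU : U ∈ 𝓝 x₀)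
    (hf : ContDiffOn ℝ n f U) :
    (fun x => f x - (taylorPolynomial f n x₀).eval x) =o[𝓝 x₀] fun x => (x - x₀) ^ n := by
  obtain ⟨ε, hε, hball⟩ := Metric.mem_nhds_iff.1 hU
  have htaylor :=
    taylor_isLittleO (convex_ball x₀ ε) (Metric.mem_ball_self hε) (hf.mono hball)
  rw [nhdsWithin_eq_nhds.2 (Metric.ball_mem_nhds x₀ hε)] at htaylor
  refine htaylor.congr_left fun x => ?_
  rw [taylor_within_apply, eval_taylorPolynomial]
  refine congrArg _ (Finset.sum_congr rfl fun j _ => ?_)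
  rw [iteratedDerivWithin_of_isOpen Metric.isOpen_ball (Metric.mem_ball_self hε), smul_eq_mul]
  ring

end taylorPolynomial

theorem stmt_3 (f : ℝ → ℝ) (p : ℕ) (xs : ℝ) (K : NNReal)
    (hreg : ∃ U ∈ nhds xs, ContDiffOn ℝ p f U ∧
      LipschitzOnWith K (iteratedDeriv p f) U)
    (hmin : IsLocalMin f xs) :
    IsLocalMin (fun x : ℝ =>
      ∑ j ∈ Finset.range (p + 1),
        iteratedDeriv j f xs / (Nat.factorial j) * (x - xs) ^ j) xs := by
  obtain ⟨U, hU, hf, -⟩ := hreg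
  simpa only [eval_taylorPolynomial] using
    isLocalMin_eval_of_isLittleO natDegree_taylorPolynomial_le hmin
      (isLittleO_sub_eval_taylorPolynomial hU hf) eval_taylorPolynomial_self.symm
end

section
/- If σ ≥ 1/4, then the origin is a local minimizer of the function (x₁,x₂) ↦ x₂² − x₁²x₂ + σ(x₁² + x₂²)², but if 0 < σ < 1/4 the origin is not a local minimizer of this function. -/
/-!
Completing the square, `x₂² − x₁²x₂ = (x₂ − x₁²/2)² − x₁⁴/4`, and `(x₁² + x₂²)² ≥ x₁⁴` show that the
function is nonnegative everywhere once `σ ≥ 1/4`. Along the parabola `x₂ = x₁²/2`, where the square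
vanishes, it equals `t⁴ (σ (1 + t²/4)² − 1/4)`, which is negative for small `t ≠ 0` when `σ < 1/4`.
-/

open Filter Topology

noncomputable section

def regTaylor (σ : ℝ) (x : ℝ × ℝ) : ℝ :=
  x.2 ^ 2 - x.1 ^ 2 * x.2 + σ * (x.1 ^ 2 + x.2 ^ 2) ^ 2

@[simp]
lemma regTaylor_zero (σ : ℝ) : regTaylor σ (0, 0) = 0 := by
  simp [regTaylor]

lemma regTaylor_nonneg {σ : ℝ} (hσ : 1 / 4 ≤ σ) (x : ℝ × ℝ) : 0 ≤ regTaylor σ x := by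
  have hsq : regTaylor σ x = (x.2 - x.1 ^ 2 / 2) ^ 2 + σ * (x.1 ^ 2 + x.2 ^ 2) ^ 2 - x.1 ^ 4 / 4 := by
    unfold regTaylor; ring
  have hquartic : x.1 ^ 4 ≤ (x.1 ^ 2 + x.2 ^ 2) ^ 2 := by nlinarith [sq_nonneg x.1, sq_nonneg x.2]
  rw [hsq]
  nlinarith [sq_nonneg (x.2 - x.1 ^ 2 / 2), mul_nonneg (sub_nonneg.2 hσ) (sq_nonneg (x.1 ^ 2 + x.2 ^ 2))]

lemma isLocalMin_regTaylor {σ : ℝ} (hσ : 1 / 4 ≤ σ) : IsLocalMin (regTaylor σ) (0, 0) :=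
  Eventually.of_forall fun x => by simpa using regTaylor_nonneg hσ x

lemma regTaylor_parabola (σ t : ℝ) :
    regTaylor σ (t, t ^ 2 / 2) = t ^ 4 * (σ * (1 + t ^ 2 / 4) ^ 2 - 1 / 4) := by
  unfold regTaylor; ring

lemma eventually_regTaylor_parabola_neg {σ : ℝ} (hσ : σ < 1 / 4) :
    ∀ᶠ t in 𝓝[≠] (0 : ℝ), regTaylor σ (t, t ^ 2 / 2) < 0 := by
  have hcont : Continuous fun t : ℝ => σ * (1 + t ^ 2 / 4) ^ 2 - 1 / 4 := by fun_prop
  have hfactor : ∀ᶠ t in 𝓝 (0 : ℝ), σ * (1 + t ^ 2 / 4) ^ 2 - 1 / 4 < 0 :=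
    hcont.continuousAt.eventually_lt continuousAt_const (by norm_num [hσ])
  filter_upwards [nhdsWithin_le_nhds hfactor, self_mem_nhdsWithin] with t ht (ht0 : t ≠ 0)
  rw [regTaylor_parabola]
  exact mul_neg_of_pos_of_neg (by positivity) ht

lemma tendsto_parabola_nhdsNE_zero :
    Tendsto (fun t : ℝ => (t, t ^ 2 / 2)) (𝓝[≠] 0) (𝓝 (0, 0)) := by
  have hcont : Continuous fun t : ℝ => (t, t ^ 2 / 2) := by fun_prop
  simpa using (hcont.tendsto 0).mono_left nhdsWithin_le_nhds

lemma not_isLocalMin_regTaylor {σ : ℝ} (hσ : σ < 1 / 4) : ¬ IsLocalMin (regTaylor σ) (0, 0) := by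
  intro hmin
  have hnonneg : ∀ᶠ t in 𝓝[≠] (0 : ℝ), 0 ≤ regTaylor σ (t, t ^ 2 / 2) := by
    simpa using tendsto_parabola_nhdsNE_zero.eventually hmin
  obtain ⟨t, ht_nonneg, ht_neg⟩ := (hnonneg.and (eventually_regTaylor_parabola_neg hσ)).exists
  exact ht_neg.not_ge ht_nonneg

end

theorem stmt_8 (σ : ℝ) :
    (σ ≥ 1/4 →
      IsLocalMin (fun x : ℝ × ℝ =>
        x.2^2 - x.1^2 * x.2 + σ * (x.1^2 + x.2^2)^2) (0, 0)) ∧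
    (0 < σ → σ < 1/4 →
      ¬ IsLocalMin (fun x : ℝ × ℝ =>
        x.2^2 - x.1^2 * x.2 + σ * (x.1^2 + x.2^2)^2) (0, 0)) :=
  ⟨fun hσ => isLocalMin_regTaylor hσ, fun _ hσ => not_isLocalMin_regTaylor hσ⟩
end
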